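/- Let Λ be a finitely generated ℤ-module with a group Γ acting on it by additive automorphisms, and let Λ^f be the finite-orbit submodule. Then Λ^f is the largest Γ-stable submodule of Λ on which the action factors through a finite group: the image of Γ in AddAut(Λ^f) (for the restricted action) is finite, and any Γ-stable submodule N of Λ such that the image of Γ in AddAut(N) is finite satisfies N ⊆ Λ^f. -/

import Mathlib

/-!
As `Λ` is a noetherian `ℤ`-module, the finite-orbit submodule `Λ^f` is spanned by finitely many
elements `t₁, …, tₙ`, each with finite orbit. An element of `Γ` acts on `Λ^f` through its values
on the `tᵢ`, which lie in the finite set `orbit t₁ × ⋯ × orbit tₙ`, so only finitely many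
restricted actions occur. Conversely, the orbit of `x ∈ N` is the image of the finite set of
restricted actions on `N` under evaluation at `x`.
-/
open MulAction Submodule

section

variable (Γ R Λ : Type*) [Monoid Γ] [Semiring R] [AddCommMonoid Λ] [Module R Λ]
  [DistribMulAction Γ Λ] [SMulCommClass Γ R Λ]

def finiteOrbitSubmodule : Submodule R Λ where
  carrier := {x | (orbit Γ x).Finite}
  zero_mem' := (Set.finite_singleton 0).subset <| by rintro _ ⟨γ, rfl⟩; simp
  add_mem' {a b} ha hb := (ha.image2 (· + ·) hb).subset <| by
    rintro _ ⟨γ, rfl⟩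
    exact ⟨γ • a, ⟨γ, rfl⟩, γ • b, ⟨γ, rfl⟩, (smul_add γ a b).symm⟩
  smul_mem' r a ha := (ha.image (r • ·)).subset <| by
    rintro _ ⟨γ, rfl⟩
    exact ⟨γ • a, ⟨γ, rfl⟩, (smul_comm γ r a).symm⟩

end

section

variable {Γ R Λ : Type*} [Monoid Γ] [Semiring R] [AddCommMonoid Λ] [Module R Λ]
  [DistribMulAction Γ Λ] [SMulCommClass Γ R Λ]

theorem smul_eq_smul_of_eqOn_span {T : Set Λ} {γ₁ γ₂ : Γ}
    (h : Set.EqOn (γ₁ • ·) (γ₂ • ·) T) {x : Λ} (hx : x ∈ span R T) : γ₁ • x = γ₂ • x :=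
  LinearMap.eqOn_span (f := DistribSMul.toLinearMap R Λ γ₁)
    (g := DistribSMul.toLinearMap R Λ γ₂) h hx

theorem finite_range_smul_restrict_of_fg {M : Submodule R Λ} (hM : M.FG)
    (horb : ∀ x ∈ M, (orbit Γ x).Finite) :
    (Set.range fun γ : Γ => fun x : M => γ • (x : Λ)).Finite := by
  obtain ⟨T, rfl⟩ := hM
  let restrict (f : span R (T : Set Λ) → Λ) (t : T) : Λ := f ⟨t, subset_span t.2⟩
  refine Set.Finite.of_finite_image (f := restrict) ?_ ?_
  · refine (Set.Finite.pi fun t : T => horb t (subset_span t.2)).subset ?_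
    rintro _ ⟨_, ⟨γ, rfl⟩, rfl⟩ t -
    exact ⟨γ, rfl⟩
  · rintro _ ⟨γ₁, rfl⟩ _ ⟨γ₂, rfl⟩ hγ
    funext x
    exact smul_eq_smul_of_eqOn_span (fun t ht => congrFun hγ ⟨t, ht⟩) x.2

end

theorem orbit_finite_of_finite_range_smul_restrict {Γ Λ : Type*} [Monoid Γ] [MulAction Γ Λ]
    {X : Set Λ} (hX : (Set.range fun γ : Γ => fun x : X => γ • (x : Λ)).Finite)
    {x : Λ} (hx : x ∈ X) : (orbit Γ x).Finite :=
  (hX.image fun f => f ⟨x, hx⟩).subset <| by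
    rintro _ ⟨γ, rfl⟩
    exact ⟨_, ⟨γ, rfl⟩, rfl⟩

/-- For a finitely generated `ℤ`-module `Λ` with a group `Γ` acting by additive
automorphisms, the finite-orbit submodule `Λ^f` is the largest `Γ`-stable
submodule on which the action factors through a finite group: the image of `Γ`
acting on `Λ^f` (encoded as the set of restricted action maps) is finite, and
any `Γ`-stable submodule `N` on which the image of `Γ` is finite is contained
in `Λ^f`. -/
theorem finite_orbit_submodule_is_largest_with_finite_action
    {Γ Λ : Type*} [Group Γ] [AddCommGroup Λ] [DistribMulAction Γ Λ]
    [Module.Finite ℤ Λ] :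
    (Set.range (fun γ : Γ =>
      fun x : {l : Λ // (MulAction.orbit Γ l).Finite} => γ • (x : Λ))).Finite ∧
    (∀ N : Submodule ℤ Λ, (∀ γ : Γ, ∀ x ∈ N, γ • x ∈ N) →
      (Set.range (fun γ : Γ => fun x : N => γ • (x : Λ))).Finite →
      ∀ x ∈ N, (MulAction.orbit Γ x).Finite) :=
  ⟨finite_range_smul_restrict_of_fg (M := finiteOrbitSubmodule Γ ℤ Λ)
      (IsNoetherian.noetherian _) fun _ h => h,
    fun _ _ hN _ hx => orbit_finite_of_finite_range_smul_restrict hN hx⟩
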